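/- Let ℏ, m, c > 0 and fix k ∈ {1,2,3}. With M_{0k} the Lorentz boost generator (M_{0k}φ)(t,x) = c t ∂_{x_k}φ + (x_k/c) ∂_t φ, the second-order commutator of the free Schrödinger operator with M_{0k} vanishes identically: for every smooth φ : ℝ × ℝ³ → ℂ, [L_s,[L_s, M_{0k}]]φ = L_s(L_s(M_{0k}φ)) − 2 L_s(M_{0k}(L_sφ)) + M_{0k}(L_s(L_sφ)) = 0. -/

import Mathlib

open Complex ContDiff

/-- Partial derivative in the `i`-th coordinate direction on `ℝ⁴`. -/
noncomputable def pd (i : Fin 4) (f : (Fin 4 → ℝ) → ℂ) : (Fin 4 → ℝ) → ℂ :=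
  fun x => fderiv ℝ f x (Pi.single i 1)

/-- The free Schrödinger operator `L_s φ = iℏ ∂_t φ + (ℏ²/(2m)) Δφ`,
with time variable `x 0` and space variables `x 1, x 2, x 3`. -/
noncomputable def Ls (hbar m : ℝ) (f : (Fin 4 → ℝ) → ℂ) : (Fin 4 → ℝ) → ℂ :=
  fun x => Complex.I * (hbar : ℂ) * pd 0 f x +
    ((hbar ^ 2 / (2 * m) : ℝ) : ℂ) *
      (pd 1 (pd 1 f) x + pd 2 (pd 2 f) x + pd 3 (pd 3 f) x)

/-- The Lorentz boost generator `M_{0k} φ = c t ∂_{x_k} φ + (x_k/c) ∂_t φ`,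
for a space index `k ∈ {1,2,3}` (here `k : Fin 3` and `x_k = x k.succ`). -/
noncomputable def M0 (c : ℝ) (k : Fin 3) (f : (Fin 4 → ℝ) → ℂ) : (Fin 4 → ℝ) → ℂ :=
  fun x => (c : ℂ) * (x 0 : ℂ) * pd k.succ f x + ((x k.succ / c : ℝ) : ℂ) * pd 0 f x

abbrev Sm (f : (Fin 4 → ℝ) → ℂ) : Prop := ContDiff ℝ ∞ f

lemma sm_pd {f} (hf : Sm f) (i : Fin 4) : Sm (pd i f) :=
  (hf.fderiv_right (le_refl _)).clm_apply contDiff_const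

lemma sm_cmul {f} (A : ℂ) (hf : Sm f) : Sm (fun x => A * f x) := contDiff_const.mul hf

lemma sm_addf {f g} (hf : Sm f) (hg : Sm g) : Sm (fun x => f x + g x) := hf.add hg

lemma sm_X {f} (j : Fin 4) (hf : Sm f) : Sm (fun x => ((x j : ℝ) : ℂ) * f x) := by
  have h0 : (fun x : Fin 4 → ℝ => ((x j : ℝ) : ℂ))
      = ⇑(Complex.ofRealCLM.comp ((ContinuousLinearMap.proj j : (Fin 4 → ℝ) →L[ℝ] ℝ))) := rfl
  have h : ContDiff ℝ ∞ (fun x : Fin 4 → ℝ => ((x j : ℝ) : ℂ)) := by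
    rw [h0]; exact (Complex.ofRealCLM.comp ((ContinuousLinearMap.proj j : (Fin 4 → ℝ) →L[ℝ] ℝ))).contDiff
  exact h.mul hf

lemma pd_add_fun {f g} (i : Fin 4) (hf : Sm f) (hg : Sm g) :
    pd i (fun x => f x + g x) = fun x => pd i f x + pd i g x := by
  funext x
  unfold pd
  rw [fderiv_fun_add ((hf.differentiable (by simp)).differentiableAt)
    ((hg.differentiable (by simp)).differentiableAt)]
  rfl

lemma pd_cmul_fun {f} (i : Fin 4) (A : ℂ) (hf : Sm f) :
    pd i (fun x => A * f x) = fun x => A * pd i f x := by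
  funext x
  unfold pd
  rw [fderiv_const_mul ((hf.differentiable (by simp)).differentiableAt)]
  rfl

noncomputable def coordCLM (j : Fin 4) : (Fin 4 → ℝ) →L[ℝ] ℂ :=
  Complex.ofRealCLM.comp (ContinuousLinearMap.proj j : (Fin 4 → ℝ) →L[ℝ] ℝ)

lemma coordCLM_apply (j : Fin 4) (x : Fin 4 → ℝ) : coordCLM j x = ((x j : ℝ) : ℂ) := rfl

lemma pd_X_gen {f} (i j : Fin 4) (hf : Sm f) :
    pd i (fun x => ((x j : ℝ) : ℂ) * f x)
      = fun x => (if j = i then f x else 0) + ((x j : ℝ) : ℂ) * pd i f x := by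
  funext x
  have hc : (fun x : Fin 4 → ℝ => ((x j : ℝ) : ℂ)) = ⇑(coordCLM j) := rfl
  have hcd : DifferentiableAt ℝ (fun x : Fin 4 → ℝ => ((x j : ℝ) : ℂ)) x := by
    rw [hc]; exact (coordCLM j).differentiableAt
  have hfd : DifferentiableAt ℝ f x := (hf.differentiable (by simp)).differentiableAt
  unfold pd
  rw [fderiv_fun_mul hcd hfd]
  have hfc : fderiv ℝ (fun x : Fin 4 → ℝ => ((x j : ℝ) : ℂ)) x = coordCLM j := by
    rw [hc]; exact (coordCLM j).fderiv
  rw [hfc]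
  simp only [ContinuousLinearMap.add_apply, ContinuousLinearMap.smul_apply, coordCLM_apply]
  have hsingle : ((Pi.single i (1:ℝ) : Fin 4 → ℝ) j : ℂ) = if j = i then 1 else 0 := by
    rw [Pi.single_apply]
    split <;> simp
  rw [hsingle]
  rcases eq_or_ne j i with h | h <;> simp [h, smul_eq_mul] <;> ring

lemma pd_X_eq {f} (i : Fin 4) (hf : Sm f) :
    pd i (fun x => ((x i : ℝ) : ℂ) * f x)
      = fun x => f x + ((x i : ℝ) : ℂ) * pd i f x := by
  rw [pd_X_gen i i hf]; simp

lemma pd_X_ne {f} {i j : Fin 4} (h : j ≠ i) (hf : Sm f) :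
    pd i (fun x => ((x j : ℝ) : ℂ) * f x)
      = fun x => ((x j : ℝ) : ℂ) * pd i f x := by
  rw [pd_X_gen i j hf]; simp [h]

lemma pd_comm {f} (hf : Sm f) (i j : Fin 4) (x : Fin 4 → ℝ) :
    pd i (pd j f) x = pd j (pd i f) x := by
  have hsym : IsSymmSndFDerivAt ℝ f x :=
    hf.contDiffAt.isSymmSndFDerivAt (by
      rw [show ((2:WithTop ℕ∞)) = ((2:ℕ∞) : WithTop ℕ∞) by norm_cast]
      simp only [minSmoothness_of_isRCLikeNormedField]
      exact WithTop.coe_le_coe.2 (le_top : (2:ℕ∞) ≤ ⊤))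
  have h2 : ContDiff ℝ ∞ (fderiv ℝ f) := hf.fderiv_right (le_refl _)
  have hd : DifferentiableAt ℝ (fderiv ℝ f) x :=
    ((h2.differentiable (by simp))).differentiableAt
  have key : ∀ v w : Fin 4 → ℝ,
      fderiv ℝ (fun y => fderiv ℝ f y v) x w = fderiv ℝ (fderiv ℝ f) x w v := by
    intro v w
    have := fderiv_clm_apply (c := fderiv ℝ f) (u := fun _ => v) hd (differentiableAt_const v)
    rw [this]
    simp
  unfold pd
  rw [key, key, hsym.eq]


lemma sm_sum3 {f} (hf : Sm f) :
    Sm (fun x => pd 1 (pd 1 f) x + pd 2 (pd 2 f) x + pd 3 (pd 3 f) x) :=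
  sm_addf (sm_addf (sm_pd (sm_pd hf 1) 1) (sm_pd (sm_pd hf 2) 2)) (sm_pd (sm_pd hf 3) 3)

lemma sm_Ls {f} (hbar m : ℝ) (hf : Sm f) : Sm (Ls hbar m f) := by
  unfold Ls
  exact sm_addf (sm_cmul _ (sm_pd hf 0)) (sm_cmul _ (sm_sum3 hf))

lemma pd_Ls {f} (hbar m : ℝ) (hf : Sm f) (i : Fin 4) :
    pd i (Ls hbar m f) = fun x =>
      Complex.I * (hbar : ℂ) * pd i (pd 0 f) x +
      ((hbar ^ 2 / (2 * m) : ℝ) : ℂ) *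
        (pd i (pd 1 (pd 1 f)) x + pd i (pd 2 (pd 2 f)) x + pd i (pd 3 (pd 3 f)) x) := by
  have h11 : Sm (pd 1 (pd 1 f)) := sm_pd (sm_pd hf 1) 1
  have h22 : Sm (pd 2 (pd 2 f)) := sm_pd (sm_pd hf 2) 2
  have h33 : Sm (pd 3 (pd 3 f)) := sm_pd (sm_pd hf 3) 3
  unfold Ls
  simp only [pd_add_fun i (sm_cmul _ (sm_pd hf 0)) (sm_cmul _ (sm_sum3 hf)),
    pd_cmul_fun i _ (sm_pd hf 0), pd_cmul_fun i _ (sm_sum3 hf),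
    pd_add_fun i (sm_addf h11 h22) h33,
    pd_add_fun i h11 h22]

lemma pd_swap3 {f} (hf : Sm f) (i j : Fin 4) (x : Fin 4 → ℝ) :
    pd i (pd j (pd j f)) x = pd j (pd j (pd i f)) x := by
  rw [pd_comm (sm_pd hf j) i j, show pd i (pd j f) = pd j (pd i f) from funext (pd_comm hf i j)]

lemma Ls_pd {f} (hbar m : ℝ) (hf : Sm f) (i : Fin 4) :
    Ls hbar m (pd i f) = pd i (Ls hbar m f) := by
  rw [pd_Ls hbar m hf i]
  funext x
  show Complex.I * (hbar : ℂ) * pd 0 (pd i f) x +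
      ((hbar ^ 2 / (2 * m) : ℝ) : ℂ) *
        (pd 1 (pd 1 (pd i f)) x + pd 2 (pd 2 (pd i f)) x + pd 3 (pd 3 (pd i f)) x) = _
  rw [pd_comm hf i 0, pd_swap3 hf i 1, pd_swap3 hf i 2, pd_swap3 hf i 3]

lemma pd_comb {f g} (i : Fin 4) (A B : ℂ) (hf : Sm f) (hg : Sm g) :
    pd i (fun y => A * f y + B * g y) = fun x => A * pd i f x + B * pd i g x := by
  simp only [pd_add_fun i (sm_cmul A hf) (sm_cmul B hg), pd_cmul_fun i A hf, pd_cmul_fun i B hg]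

lemma sm_comb {f g} (A B : ℂ) (hf : Sm f) (hg : Sm g) : Sm (fun y => A * f y + B * g y) :=
  sm_addf (sm_cmul A hf) (sm_cmul B hg)

lemma Ls_comb {f g} (hbar m : ℝ) (A B : ℂ) (hf : Sm f) (hg : Sm g) :
    Ls hbar m (fun y => A * f y + B * g y)
      = fun x => A * Ls hbar m f x + B * Ls hbar m g x := by
  funext x
  unfold Ls
  simp only [pd_comb 0 A B hf hg, pd_comb 1 A B hf hg, pd_comb 2 A B hf hg,
    pd_comb 3 A B hf hg,
    pd_comb 1 A B (sm_pd hf 1) (sm_pd hg 1),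
    pd_comb 2 A B (sm_pd hf 2) (sm_pd hg 2),
    pd_comb 3 A B (sm_pd hf 3) (sm_pd hg 3)]
  ring

lemma Ls_X0 {g} (hbar m : ℝ) (hg : Sm g) :
    Ls hbar m (fun y => ((y 0 : ℝ) : ℂ) * g y)
      = fun x => ((x 0 : ℝ) : ℂ) * Ls hbar m g x + Complex.I * (hbar : ℂ) * g x := by
  funext x
  unfold Ls
  simp only [pd_X_eq 0 hg,
    pd_X_ne (by decide : (0:Fin 4) ≠ 1) hg, pd_X_ne (by decide : (0:Fin 4) ≠ 1) (sm_pd hg 1),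
    pd_X_ne (by decide : (0:Fin 4) ≠ 2) hg, pd_X_ne (by decide : (0:Fin 4) ≠ 2) (sm_pd hg 2),
    pd_X_ne (by decide : (0:Fin 4) ≠ 3) hg, pd_X_ne (by decide : (0:Fin 4) ≠ 3) (sm_pd hg 3)]
  ring

lemma Ls_X1 {h} (hbar m : ℝ) (hh : Sm h) :
    Ls hbar m (fun y => ((y 1 : ℝ) : ℂ) * h y)
      = fun x => ((x 1 : ℝ) : ℂ) * Ls hbar m h x
          + 2 * ((hbar ^ 2 / (2 * m) : ℝ) : ℂ) * pd 1 h x := by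
  funext x
  unfold Ls
  simp only [pd_X_ne (by decide : (1:Fin 4) ≠ 0) hh,
    pd_X_eq 1 hh,
    pd_add_fun 1 hh (sm_X 1 (sm_pd hh 1)),
    pd_X_eq 1 (sm_pd hh 1),
    pd_X_ne (by decide : (1:Fin 4) ≠ 2) hh, pd_X_ne (by decide : (1:Fin 4) ≠ 2) (sm_pd hh 2),
    pd_X_ne (by decide : (1:Fin 4) ≠ 3) hh, pd_X_ne (by decide : (1:Fin 4) ≠ 3) (sm_pd hh 3)]
  ring

lemma Ls_X2 {h} (hbar m : ℝ) (hh : Sm h) :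
    Ls hbar m (fun y => ((y 2 : ℝ) : ℂ) * h y)
      = fun x => ((x 2 : ℝ) : ℂ) * Ls hbar m h x
          + 2 * ((hbar ^ 2 / (2 * m) : ℝ) : ℂ) * pd 2 h x := by
  funext x
  unfold Ls
  simp only [pd_X_ne (by decide : (2:Fin 4) ≠ 0) hh,
    pd_X_eq 2 hh,
    pd_add_fun 2 hh (sm_X 2 (sm_pd hh 2)),
    pd_X_eq 2 (sm_pd hh 2),
    pd_X_ne (by decide : (2:Fin 4) ≠ 1) hh, pd_X_ne (by decide : (2:Fin 4) ≠ 1) (sm_pd hh 1),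
    pd_X_ne (by decide : (2:Fin 4) ≠ 3) hh, pd_X_ne (by decide : (2:Fin 4) ≠ 3) (sm_pd hh 3)]
  ring

lemma Ls_X3 {h} (hbar m : ℝ) (hh : Sm h) :
    Ls hbar m (fun y => ((y 3 : ℝ) : ℂ) * h y)
      = fun x => ((x 3 : ℝ) : ℂ) * Ls hbar m h x
          + 2 * ((hbar ^ 2 / (2 * m) : ℝ) : ℂ) * pd 3 h x := by
  funext x
  unfold Ls
  simp only [pd_X_ne (by decide : (3:Fin 4) ≠ 0) hh,
    pd_X_eq 3 hh,
    pd_add_fun 3 hh (sm_X 3 (sm_pd hh 3)),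
    pd_X_eq 3 (sm_pd hh 3),
    pd_X_ne (by decide : (3:Fin 4) ≠ 1) hh, pd_X_ne (by decide : (3:Fin 4) ≠ 1) (sm_pd hh 1),
    pd_X_ne (by decide : (3:Fin 4) ≠ 2) hh, pd_X_ne (by decide : (3:Fin 4) ≠ 2) (sm_pd hh 2)]
  ring

lemma Ls_Xk {h} (hbar m : ℝ) (k : Fin 3) (hh : Sm h) :
    Ls hbar m (fun y => ((y k.succ : ℝ) : ℂ) * h y)
      = fun x => ((x k.succ : ℝ) : ℂ) * Ls hbar m h x
          + 2 * ((hbar ^ 2 / (2 * m) : ℝ) : ℂ) * pd k.succ h x := by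
  fin_cases k
  · exact Ls_X1 hbar m hh
  · exact Ls_X2 hbar m hh
  · exact Ls_X3 hbar m hh

lemma M0_eq (c : ℝ) (k : Fin 3) (f : (Fin 4 → ℝ) → ℂ) :
    M0 c k f = fun x => (c : ℂ) * (((x 0 : ℝ) : ℂ) * pd k.succ f x)
      + ((c : ℂ))⁻¹ * (((x k.succ : ℝ) : ℂ) * pd 0 f x) := by
  funext x
  unfold M0
  push_cast
  ring

lemma sm_M0 {f} (c : ℝ) (k : Fin 3) (hf : Sm f) : Sm (M0 c k f) := by
  rw [M0_eq]
  exact sm_comb _ _ (sm_X 0 (sm_pd hf k.succ)) (sm_X k.succ (sm_pd hf 0))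

lemma LsM0_comm {f} (hbar m c : ℝ) (k : Fin 3) (hf : Sm f) :
    Ls hbar m (M0 c k f) = fun x => M0 c k (Ls hbar m f) x
      + (c : ℂ) * (Complex.I * (hbar : ℂ)) * pd k.succ f x
      + (c : ℂ)⁻¹ * (2 * ((hbar ^ 2 / (2 * m) : ℝ) : ℂ)) * pd k.succ (pd 0 f) x := by
  funext x
  rw [M0_eq c k f]
  simp only [Ls_comb hbar m ((c:ℂ)) ((c:ℂ))⁻¹ (sm_X 0 (sm_pd hf k.succ)) (sm_X k.succ (sm_pd hf 0)),
    Ls_X0 hbar m (sm_pd hf k.succ), Ls_Xk hbar m k (sm_pd hf 0),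
    Ls_pd hbar m hf k.succ, Ls_pd hbar m hf 0]
  unfold M0
  rw [← Ls_pd hbar m hf k.succ, ← Ls_pd hbar m hf 0]
  push_cast
  ring

/-- the second-order commutator of the free Schrödinger operator
with the Lorentz boost generator `M_{0k}` vanishes identically:
`[L_s,[L_s,M_{0k}]]φ = L_s(L_s(M_{0k}φ)) − 2L_s(M_{0k}(L_sφ)) + M_{0k}(L_s(L_sφ)) = 0`. -/
theorem stmt_4 (hbar m c : ℝ) (hhbar : 0 < hbar) (hm : 0 < m) (hc : 0 < c)
    (k : Fin 3) (φ : (Fin 4 → ℝ) → ℂ) (hφ : ContDiff ℝ (⊤ : ℕ∞) φ) :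
    ∀ x : Fin 4 → ℝ,
      Ls hbar m (Ls hbar m (M0 c k φ)) x
        - 2 * Ls hbar m (M0 c k (Ls hbar m φ)) x
        + M0 c k (Ls hbar m (Ls hbar m φ)) x = 0 := by
  intro x
  have hφ' : Sm φ := hφ.of_le (by simp)
  set A : ℂ := (c : ℂ) * (Complex.I * (hbar : ℂ)) with hA
  set B : ℂ := (c : ℂ)⁻¹ * (2 * ((hbar ^ 2 / (2 * m) : ℝ) : ℂ)) with hB
  have hLφ : Sm (Ls hbar m φ) := sm_Ls hbar m hφ'
  -- first-order commutators
  have h1 := LsM0_comm hbar m c k hφ'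
  have h2 := LsM0_comm hbar m c k hLφ
  -- rewrite Ls (M0 φ) as M0 (Ls φ) + C φ
  have hsm1 : Sm (M0 c k (Ls hbar m φ)) := sm_M0 c k hLφ
  have hC : Sm (fun y => A * pd k.succ φ y + B * pd k.succ (pd 0 φ) y) :=
    sm_comb A B (sm_pd hφ' k.succ) (sm_pd (sm_pd hφ' 0) k.succ)
  have h1' : Ls hbar m (M0 c k φ) = fun y => M0 c k (Ls hbar m φ) y
      + (A * pd k.succ φ y + B * pd k.succ (pd 0 φ) y) := by
    rw [h1]; funext y; ring
  rw [h1']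
  have hexp : Ls hbar m (fun y => M0 c k (Ls hbar m φ) y
      + (A * pd k.succ φ y + B * pd k.succ (pd 0 φ) y)) x
      = Ls hbar m (M0 c k (Ls hbar m φ)) x
        + Ls hbar m (fun y => A * pd k.succ φ y + B * pd k.succ (pd 0 φ) y) x := by
    have := Ls_comb hbar m 1 1 hsm1 hC
    simp only [one_mul] at this
    calc Ls hbar m (fun y => M0 c k (Ls hbar m φ) y
        + (A * pd k.succ φ y + B * pd k.succ (pd 0 φ) y)) x
        = Ls hbar m (fun y => 1 * M0 c k (Ls hbar m φ) y
            + 1 * (A * pd k.succ φ y + B * pd k.succ (pd 0 φ) y)) x := by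
          congr 1; funext y; ring
      _ = _ := by rw [Ls_comb hbar m 1 1 hsm1 hC]; simp
  rw [hexp, h2]
  -- expand Ls of the commutator C φ
  rw [Ls_comb hbar m A B (sm_pd hφ' k.succ) (sm_pd (sm_pd hφ' 0) k.succ)]
  -- identify Ls∘pd with pd∘Ls
  have e1 : Ls hbar m (pd k.succ φ) = pd k.succ (Ls hbar m φ) := Ls_pd hbar m hφ' k.succ
  have e2 : Ls hbar m (pd k.succ (pd 0 φ)) = pd k.succ (pd 0 (Ls hbar m φ)) := by
    rw [Ls_pd hbar m (sm_pd hφ' 0) k.succ, Ls_pd hbar m hφ' 0]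
  rw [e1, e2]
  ring
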